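/- There exist constants c, C > 0 such that for every sign μ ∈ {+1, −1} and all ξ, η ∈ ℝ² with 0 < |ξ| ≤ 2^{−10} |η| (the low–high interaction with μν = +1, i.e., ν = μ): c Λ(|η|) ≤ |Φ^{μ,μ}(ξ, η)| ≤ C Λ(|η|); that is, in this regime |Φ^{μ,μ}(ξ, η)| is comparable to max{Λ(|ξ|), Λ(|η|)} = Λ(|η|). -/

import Mathlib

noncomputable section

abbrev E2 : Type := EuclideanSpace ℝ (Fin 2)

/-- Euclidean dot product on ℝ². -/
def dotE (x y : E2) : ℝ := ∑ i : Fin 2, x i * y i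

/-- `Λ(r) = r^{3/2} (tanh r)^{1/2}`. -/
def Lam (r : ℝ) : ℝ := r ^ ((3 : ℝ) / 2) * Real.sqrt (Real.tanh r)

/-- `λ(x) = Λ(√x)`. -/
def lam (x : ℝ) : ℝ := Lam (Real.sqrt x)

/-- The phase `Φ^{μ,ν}(ξ,η) = Λ(|ξ|) − μ Λ(|ξ−η|) − ν Λ(|η|)`. -/
def Phi (μ ν : ℝ) (ξ η : E2) : ℝ := Lam ‖ξ‖ - μ * Lam ‖ξ - η‖ - ν * Lam ‖η‖

/-!
For `|ξ| ≤ 2⁻¹⁰ |η|` the three frequencies satisfy `|ξ| ≪ |η|` and `|ξ - η| ≤ 2 |η|`. Since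
`Λ(a r) ≤ a^{3/2} Λ(r)` for `a ≤ 1` and `Λ(2 r) ≤ 4 Λ(r)` (from `tanh (2 r) ≤ 2 tanh r`), this gives
`Λ(|ξ|) ≤ Λ(|η|) / 2` and `Λ(|ξ - η|) ≤ 4 Λ(|η|)`. For `μ = ν = -1` all three terms of the phase
are nonnegative; for `μ = ν = 1` the term `Λ(|ξ|)` is too small to cancel `-Λ(|η|)`.
-/

open Real Set

namespace Real

theorem strictMono_tanh : StrictMono tanh := fun x y h => by
  have hmem (z : ℝ) : tanh z ∈ Ioo (-1) 1 := ⟨neg_one_lt_tanh z, tanh_lt_one z⟩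
  rwa [← artanh_lt_artanh_iff (hmem x) (hmem y), artanh_tanh, artanh_tanh]

theorem tanh_pos {x : ℝ} (hx : 0 < x) : 0 < tanh x := by
  simpa using strictMono_tanh hx

theorem tanh_two_mul_le {r : ℝ} (hr : 0 ≤ r) : tanh (2 * r) ≤ 2 * tanh r := by
  rw [tanh_eq_sinh_div_cosh, tanh_eq_sinh_div_cosh, mul_div_assoc',
    div_le_div_iff₀ (cosh_pos _) (cosh_pos _), sinh_two_mul, cosh_two_mul]
  have hs : 0 ≤ sinh r := sinh_nonneg_iff.2 hr
  nlinarith [cosh_pos r]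

end Real

theorem Lam_nonneg {r : ℝ} (hr : 0 ≤ r) : 0 ≤ Lam r :=
  mul_nonneg (rpow_nonneg hr _) (sqrt_nonneg _)

theorem Lam_pos {r : ℝ} (hr : 0 < r) : 0 < Lam r :=
  mul_pos (rpow_pos_of_pos hr _) (sqrt_pos.2 (tanh_pos hr))

theorem Lam_le_Lam {a b : ℝ} (ha : 0 ≤ a) (hab : a ≤ b) : Lam a ≤ Lam b :=
  mul_le_mul (rpow_le_rpow ha hab (by norm_num)) (sqrt_le_sqrt (strictMono_tanh.monotone hab))
    (sqrt_nonneg _) (rpow_nonneg (ha.trans hab) _)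

theorem Lam_mul_le {a r : ℝ} (ha₀ : 0 ≤ a) (ha₁ : a ≤ 1) (hr : 0 ≤ r) :
    Lam (a * r) ≤ a ^ ((3 : ℝ) / 2) * Lam r := by
  have htanh : sqrt (tanh (a * r)) ≤ sqrt (tanh r) :=
    sqrt_le_sqrt (strictMono_tanh.monotone (mul_le_of_le_one_left hr ha₁))
  calc Lam (a * r) = a ^ ((3 : ℝ) / 2) * r ^ ((3 : ℝ) / 2) * sqrt (tanh (a * r)) := by
        rw [Lam, mul_rpow ha₀ hr]
    _ ≤ a ^ ((3 : ℝ) / 2) * r ^ ((3 : ℝ) / 2) * sqrt (tanh r) := by gcongr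
    _ = a ^ ((3 : ℝ) / 2) * Lam r := by rw [Lam, mul_assoc]

theorem Lam_two_mul_le {r : ℝ} (hr : 0 ≤ r) : Lam (2 * r) ≤ 4 * Lam r := by
  have htanh : sqrt (tanh (2 * r)) ≤ sqrt 2 * sqrt (tanh r) := by
    rw [← sqrt_mul zero_le_two]
    exact sqrt_le_sqrt (tanh_two_mul_le hr)
  have hfour : (2 : ℝ) ^ ((3 : ℝ) / 2) * sqrt 2 = 4 := by
    rw [sqrt_eq_rpow, ← rpow_add zero_lt_two]
    norm_num
  calc Lam (2 * r) = 2 ^ ((3 : ℝ) / 2) * r ^ ((3 : ℝ) / 2) * sqrt (tanh (2 * r)) := by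
        rw [Lam, mul_rpow zero_le_two hr]
    _ ≤ 2 ^ ((3 : ℝ) / 2) * r ^ ((3 : ℝ) / 2) * (sqrt 2 * sqrt (tanh r)) := by gcongr
    _ = (2 ^ ((3 : ℝ) / 2) * sqrt 2) * Lam r := by rw [Lam]; ring
    _ = 4 * Lam r := by rw [hfour]

theorem Lam_le_half_of_le_half {s r : ℝ} (hs : 0 ≤ s) (hsr : s ≤ r / 2) :
    Lam s ≤ Lam r / 2 := by
  have hr : 0 ≤ r := by linarith
  have hpow : ((1 : ℝ) / 2) ^ ((3 : ℝ) / 2) ≤ 1 / 2 := by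
    simpa using rpow_le_rpow_of_exponent_ge (by norm_num : (0 : ℝ) < 1 / 2) (by norm_num)
      (by norm_num : (1 : ℝ) ≤ 3 / 2)
  calc Lam s ≤ Lam (1 / 2 * r) := Lam_le_Lam hs (by linarith)
    _ ≤ (1 / 2) ^ ((3 : ℝ) / 2) * Lam r := Lam_mul_le (by norm_num) (by norm_num) hr
    _ ≤ 1 / 2 * Lam r := by gcongr; exact Lam_nonneg hr
    _ = Lam r / 2 := by ring

theorem Lam_norm_sub_le {F : Type*} [SeminormedAddCommGroup F] {x y : F} (h : ‖x‖ ≤ ‖y‖) :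
    Lam ‖x - y‖ ≤ 4 * Lam ‖y‖ :=
  calc Lam ‖x - y‖ ≤ Lam (2 * ‖y‖) := Lam_le_Lam (norm_nonneg _) (by linarith [norm_sub_le x y])
    _ ≤ 4 * Lam ‖y‖ := Lam_two_mul_le (norm_nonneg _)

theorem stmt18 :
    ∃ c C : ℝ, 0 < c ∧ 0 < C ∧
      ∀ μ : ℝ, (μ = 1 ∨ μ = -1) →
        ∀ ξ η : E2, 0 < ‖ξ‖ → ‖ξ‖ ≤ (2 : ℝ) ^ (-10 : ℤ) * ‖η‖ →
          c * Lam ‖η‖ ≤ |Phi μ μ ξ η| ∧ |Phi μ μ ξ η| ≤ C * Lam ‖η‖ := by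
  refine ⟨1 / 2, 6, by norm_num, by norm_num, ?_⟩
  rintro μ hμ ξ η hξ hξη
  have hη : 0 < ‖η‖ := pos_of_mul_pos_right (hξ.trans_le hξη) (by positivity)
  have hlow : Lam ‖ξ‖ ≤ Lam ‖η‖ / 2 :=
    Lam_le_half_of_le_half (norm_nonneg _) (by norm_num at hξη ⊢; linarith)
  have hdiff : Lam ‖ξ - η‖ ≤ 4 * Lam ‖η‖ := Lam_norm_sub_le (by norm_num at hξη; linarith)
  have := Lam_pos hη
  have := Lam_nonneg (norm_nonneg ξ)
  have := Lam_nonneg (norm_nonneg (ξ - η))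
  rcases hμ with rfl | rfl
  · rw [Phi, abs_of_neg (by linarith)]
    constructor <;> linarith
  · rw [Phi, abs_of_pos (by linarith)]
    constructor <;> linarith

end
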